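/- Let d,n∈ℕ⁺. There exists a constant C=C(n,d) such that for every K∈ℕ⁺, every 𝐦∈{1,…,K}^d and every multi-index α∈ℕ^d with |α| ≤ n−1: ‖ x^α s_𝐦(x) ‖_{H²([0,1]^d)} ≤ C K^{2 − d/2}. -/

import Mathlib

open scoped BigOperators
open MeasureTheory

noncomputable section




/-- the unit cube `[0,1]^d` -/
def unitCube (d : ℕ) : Set (Fin d → ℝ) := Set.Icc 0 1

/-- the `W^{n,∞}([0,1]^d)` norm (strong-derivative formulation): the supremum over all
derivative orders `k ≤ n` and points of the cube of the norm of the `k`-th derivative. -/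
def wNormInf (d n : ℕ) (f : (Fin d → ℝ) → ℝ) : ℝ :=
  sSup {y : ℝ | ∃ k : ℕ, k ≤ n ∧ ∃ x ∈ unitCube d, y = ‖iteratedFDeriv ℝ k f x‖}

/-- the `H^n([0,1]^d)` Sobolev norm -/
def hNorm (d n : ℕ) (f : (Fin d → ℝ) → ℝ) : ℝ :=
  Real.sqrt (∑ k ∈ Finset.range (n + 1), ∫ x in unitCube d, ‖iteratedFDeriv ℝ k f x‖ ^ 2)

/-- Fourier coefficient `f̂(k)` of a (1-periodic) function -/
def fCoeff (d : ℕ) (f : (Fin d → ℝ) → ℂ) (k : Fin d → ℤ) : ℂ :=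
  ∫ x in unitCube d,
    f x * Complex.exp (-(2 * Real.pi * Complex.I) * ∑ j, (k j : ℂ) * (x j : ℂ))

/-- the weight `(1+|k|²)^s` -/
def hsWeight (d : ℕ) (s : ℝ) (k : Fin d → ℤ) : ℝ := (1 + ∑ j, ((k j : ℝ)) ^ 2) ^ s

/-- the `H^s(𝕋^d)` norm of a complex-valued function -/
def hsNormC (d : ℕ) (s : ℝ) (f : (Fin d → ℝ) → ℂ) : ℝ :=
  Real.sqrt (∑' k : Fin d → ℤ, hsWeight d s k * ‖fCoeff d f k‖ ^ 2)

/-- the `H^s(𝕋^d)` norm of a real-valued function -/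
def hsNorm (d : ℕ) (s : ℝ) (f : (Fin d → ℝ) → ℝ) : ℝ := hsNormC d s fun x => (f x : ℂ)

/-- `f` is 1-periodic in each coordinate -/
def isPeriodic (d : ℕ) (f : (Fin d → ℝ) → ℝ) : Prop :=
  ∀ (x : Fin d → ℝ) (j : Fin d), f (fun i => x i + if i = j then 1 else 0) = f x

/-- membership in `H^s(𝕋^d)` (continuous representative) -/
def memHs (d : ℕ) (s : ℝ) (f : (Fin d → ℝ) → ℝ) : Prop :=
  isPeriodic d f ∧ Continuous f ∧
    Summable fun k : Fin d → ℤ =>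
      hsWeight d s k * ‖fCoeff d (fun x => (f x : ℂ)) k‖ ^ 2

/-- the sampling (encoding) map `D(f) = (f(ν/(2N+1)))_{ν ∈ {0,…,2N}^d}` -/
def sampleD (d N : ℕ) (f : (Fin d → ℝ) → ℝ) : Fin ((2 * N + 1) ^ d) → ℝ :=
  fun i => f fun j => ((finFunctionFinEquiv.symm i j : ℕ) : ℝ) / (2 * N + 1)



/-- the piecewise-quadratic cutoff function `s` -/
def sFun (x : ℝ) : ℝ :=
  if x < 0 then 0
  else if x ≤ 1 / 2 then 2 * x ^ 2
  else if x ≤ 1 then -2 * (x - 1) ^ 2 + 1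
  else if x ≤ 5 then 1
  else if x ≤ 11 / 2 then -2 * (x - 5) ^ 2 + 1
  else if x ≤ 6 then 2 * (x - 6) ^ 2
  else 0

/-- `s_m(x) = s(4Kx + 5 - 4m)` -/
def smOne (K m : ℕ) (x : ℝ) : ℝ := sFun (4 * K * x + 5 - 4 * m)

/-- `s_𝐦(x) = ∏_j s_{m_j}(x_j)`, the partition-of-unity factor -/
def smProd (d K : ℕ) (mv : Fin d → ℕ) (x : Fin d → ℝ) : ℝ := ∏ j, smOne K (mv j) (x j)

open Set Function Filter Topology

/-!
Write the trunk function as `∏ⱼ gⱼ(xⱼ)` with `gⱼ(t) = t ^ αⱼ * s_{mⱼ}(t)`. The cutoff `s` is the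
quadratic spline `2x₊² - 4(x - 1/2)₊² + 2(x - 1)₊² - 2(x - 5)₊² + 4(x - 11/2)₊² - 2(x - 6)₊²`, so it
is `C¹` with a Lipschitz derivative. After the rescaling `t ↦ 4Kt + 5 - 4m`, every factor satisfies
`|gⱼ| ≤ B`, `|gⱼ'| ≤ BK` and `Lip gⱼ' ≤ BK²` on `[-2, 2]`, where `B` depends only on `n`. The
product rule then bounds the derivatives of order `≤ 2` by `O(K²)` on the cube. The trunk function
is not `C²`, so the second derivative is bounded by the Lipschitz constant of the first. The trunk
function vanishes outside a box of volume `(3/(2K))^d`, so `∫ ‖Dᵏ f‖² = O(K⁴ K⁻ᵈ)`, which gives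
`‖f‖_{H²} = O(K^{2 - d/2})`.
-/

theorem abs_mul_sub_mul_le (a b c d : ℝ) : |a * b - c * d| ≤ |a| * |b - d| + |d| * |a - c| := by
  rw [← abs_mul, ← abs_mul, show a * b - c * d = a * (b - d) + d * (a - c) by ring]
  exact abs_add_le _ _

open Finset in
theorem abs_prod_le_pow_card {ι : Type*} (s : Finset ι) {u : ι → ℝ} {A : ℝ}
    (hu : ∀ i ∈ s, |u i| ≤ A) : |∏ i ∈ s, u i| ≤ A ^ #s := by
  rw [abs_prod]
  exact (prod_le_prod (fun i _ => abs_nonneg _) hu).trans_eq (prod_const A)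

open Finset in
theorem abs_prod_sub_prod_le {ι : Type*} [DecidableEq ι] (s : Finset ι) {u v : ι → ℝ} {A : ℝ}
    (hu : ∀ i ∈ s, |u i| ≤ A) (hv : ∀ i ∈ s, |v i| ≤ A) :
    |∏ i ∈ s, u i - ∏ i ∈ s, v i| ≤ A ^ (#s - 1) * ∑ i ∈ s, |u i - v i| := by
  induction s using Finset.induction_on with
  | empty => simp
  | insert a s ha ih =>
    rw [Finset.forall_mem_insert] at hu hv
    have hA : 0 ≤ A := (abs_nonneg _).trans hu.1
    rw [prod_insert ha, prod_insert ha, sum_insert ha, card_insert_of_notMem ha,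
      Nat.add_sub_cancel]
    have hs : A * (A ^ (#s - 1) * ∑ i ∈ s, |u i - v i|) ≤ A ^ #s * ∑ i ∈ s, |u i - v i| := by
      rcases s.eq_empty_or_nonempty with rfl | hne
      · simp
      · rw [← mul_assoc, ← pow_succ', Nat.sub_add_cancel hne.card_pos]
    calc |u a * ∏ i ∈ s, u i - v a * ∏ i ∈ s, v i|
        ≤ |u a| * |∏ i ∈ s, u i - ∏ i ∈ s, v i| + |∏ i ∈ s, v i| * |u a - v a| :=
          abs_mul_sub_mul_le _ _ _ _
      _ ≤ A * (A ^ (#s - 1) * ∑ i ∈ s, |u i - v i|) + A ^ #s * |u a - v a| := by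
          gcongr
          exacts [hu.1, ih hu.2 hv.2, abs_prod_le_pow_card s hv.2]
      _ ≤ A ^ #s * (|u a - v a| + ∑ i ∈ s, |u i - v i|) := by linarith

theorem norm_sum_smul_proj_le {ι : Type*} [Fintype ι] (c : ι → ℝ) :
    ‖∑ i, c i • (ContinuousLinearMap.proj i : (ι → ℝ) →L[ℝ] ℝ)‖ ≤ ∑ i, |c i| := by
  refine ContinuousLinearMap.opNorm_le_bound _ (Finset.sum_nonneg fun i _ => abs_nonneg _)
    fun y => ?_
  simp only [FunLike.coe_sum, Finset.sum_apply, FunLike.coe_smul,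
    Pi.smul_apply, ContinuousLinearMap.proj_apply, smul_eq_mul, Finset.sum_mul]
  refine (Finset.abs_sum_le_sum_abs _ _).trans (Finset.sum_le_sum fun i _ => ?_)
  rw [abs_mul]
  exact mul_le_mul_of_nonneg_left (norm_le_pi_norm y i) (abs_nonneg _)

structure HasC11Bounds (f f' : ℝ → ℝ) (S : Set ℝ) (A₀ A₁ A₂ : ℝ) : Prop where
  hasDerivAt : ∀ t, HasDerivAt f (f' t) t
  abs_le : ∀ t ∈ S, |f t| ≤ A₀
  abs_deriv_le : ∀ t ∈ S, |f' t| ≤ A₁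
  abs_deriv_sub_le : ∀ s ∈ S, ∀ t ∈ S, |f' s - f' t| ≤ A₂ * |s - t|

namespace HasC11Bounds

variable {f f' g g' : ℝ → ℝ} {S : Set ℝ} {A₀ A₁ A₂ B₀ B₁ B₂ : ℝ}

theorem abs_sub_le (hf : HasC11Bounds f f' S A₀ A₁ A₂) (hS : Convex ℝ S)
    {s t : ℝ} (hs : s ∈ S) (ht : t ∈ S) : |f s - f t| ≤ A₁ * |s - t| :=
  hS.norm_image_sub_le_of_norm_hasDerivWithin_le (fun x _ => (hf.hasDerivAt x).hasDerivWithinAt)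
    hf.abs_deriv_le ht hs

theorem mono (hf : HasC11Bounds f f' S A₀ A₁ A₂) {T : Set ℝ} (hT : T ⊆ S) :
    HasC11Bounds f f' T A₀ A₁ A₂ where
  hasDerivAt := hf.hasDerivAt
  abs_le t ht := hf.abs_le t (hT ht)
  abs_deriv_le t ht := hf.abs_deriv_le t (hT ht)
  abs_deriv_sub_le s hs t ht := hf.abs_deriv_sub_le s (hT hs) t (hT ht)

theorem mono_bounds (hf : HasC11Bounds f f' S A₀ A₁ A₂) {A₀' A₁' A₂' : ℝ} (h₀ : A₀ ≤ A₀')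
    (h₁ : A₁ ≤ A₁') (h₂ : A₂ ≤ A₂') : HasC11Bounds f f' S A₀' A₁' A₂' where
  hasDerivAt := hf.hasDerivAt
  abs_le t ht := (hf.abs_le t ht).trans h₀
  abs_deriv_le t ht := (hf.abs_deriv_le t ht).trans h₁
  abs_deriv_sub_le s hs t ht :=
    (hf.abs_deriv_sub_le s hs t ht).trans (mul_le_mul_of_nonneg_right h₂ (abs_nonneg _))

theorem comp_affine (hf : HasC11Bounds f f' S A₀ A₁ A₂) {c : ℝ} (hc : 0 ≤ c) (e : ℝ) :
    HasC11Bounds (fun t => f (c * t + e)) (fun t => c * f' (c * t + e))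
      ((fun t => c * t + e) ⁻¹' S) A₀ (c * A₁) (c ^ 2 * A₂) where
  hasDerivAt t := ((hf.hasDerivAt (c * t + e)).comp t
    (((hasDerivAt_id' t).const_mul c).add_const e)).congr_deriv (by ring)
  abs_le t ht := hf.abs_le _ ht
  abs_deriv_le t ht := by
    rw [abs_mul, abs_of_nonneg hc]
    exact mul_le_mul_of_nonneg_left (hf.abs_deriv_le _ ht) hc
  abs_deriv_sub_le s hs t ht := by
    have h := hf.abs_deriv_sub_le _ hs _ ht
    rw [add_sub_add_right_eq_sub, ← mul_sub, abs_mul, abs_of_nonneg hc] at h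
    rw [← mul_sub, abs_mul, abs_of_nonneg hc]
    calc c * |f' (c * s + e) - f' (c * t + e)| ≤ c * (A₂ * (c * |s - t|)) :=
          mul_le_mul_of_nonneg_left h hc
      _ = c ^ 2 * A₂ * |s - t| := by ring

theorem mul (hf : HasC11Bounds f f' S A₀ A₁ A₂) (hg : HasC11Bounds g g' S B₀ B₁ B₂)
    (hS : Convex ℝ S) :
    HasC11Bounds (fun t => f t * g t) (fun t => f' t * g t + f t * g' t) S
      (A₀ * B₀) (A₁ * B₀ + A₀ * B₁) (A₂ * B₀ + 2 * (A₁ * B₁) + A₀ * B₂) where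
  hasDerivAt t := (hf.hasDerivAt t).mul (hg.hasDerivAt t)
  abs_le t ht := by
    rw [abs_mul]
    exact mul_le_mul (hf.abs_le t ht) (hg.abs_le t ht) (abs_nonneg _)
      ((abs_nonneg _).trans (hf.abs_le t ht))
  abs_deriv_le t ht := by
    have hA₀ := (abs_nonneg _).trans (hf.abs_le t ht)
    have hA₁ := (abs_nonneg _).trans (hf.abs_deriv_le t ht)
    calc |f' t * g t + f t * g' t| ≤ |f' t| * |g t| + |f t| * |g' t| := by
          rw [← abs_mul, ← abs_mul]; exact abs_add_le _ _
      _ ≤ A₁ * B₀ + A₀ * B₁ := add_le_add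
          (mul_le_mul (hf.abs_deriv_le t ht) (hg.abs_le t ht) (abs_nonneg _) hA₁)
          (mul_le_mul (hf.abs_le t ht) (hg.abs_deriv_le t ht) (abs_nonneg _) hA₀)
  abs_deriv_sub_le s hs t ht := by
    have hf₀ := hf.abs_le s hs
    have hf₁ := hf.abs_deriv_le s hs
    have hg₀ := hg.abs_le t ht
    have hg₁ := hg.abs_deriv_le t ht
    have hA₁ : 0 ≤ A₁ := (abs_nonneg _).trans hf₁
    have hA₀ : 0 ≤ A₀ := (abs_nonneg _).trans hf₀
    have hB₀ : 0 ≤ B₀ := (abs_nonneg _).trans hg₀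
    have hB₁ : 0 ≤ B₁ := (abs_nonneg _).trans hg₁
    calc |f' s * g s + f s * g' s - (f' t * g t + f t * g' t)|
        ≤ |f' s * g s - f' t * g t| + |f s * g' s - f t * g' t| := by
          rw [add_sub_add_comm]; exact abs_add_le _ _
      _ ≤ (|f' s| * |g s - g t| + |g t| * |f' s - f' t|)
          + (|f s| * |g' s - g' t| + |g' t| * |f s - f t|) :=
          add_le_add (abs_mul_sub_mul_le _ _ _ _) (abs_mul_sub_mul_le _ _ _ _)
      _ ≤ (A₁ * (B₁ * |s - t|) + B₀ * (A₂ * |s - t|))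
          + (A₀ * (B₂ * |s - t|) + B₁ * (A₁ * |s - t|)) := by
          gcongr
          exacts [hg.abs_sub_le hS hs ht, hf.abs_deriv_sub_le s hs t ht,
            hg.abs_deriv_sub_le s hs t ht, hf.abs_sub_le hS hs ht]
      _ = (A₂ * B₀ + 2 * (A₁ * B₁) + A₀ * B₂) * |s - t| := by ring

end HasC11Bounds

theorem abs_pow_le_of_mem_Icc {R t : ℝ} (hR : 1 ≤ R) (ht : t ∈ Icc (-R) R) {k n : ℕ}
    (hk : k ≤ n) : |t ^ k| ≤ R ^ n := by
  rw [abs_pow]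
  exact (pow_le_pow_left₀ (abs_nonneg t) (abs_le.mpr ht) k).trans (pow_le_pow_right₀ hR hk)

theorem abs_natCast_mul_pow_le_of_mem_Icc {R t : ℝ} (hR : 1 ≤ R) (ht : t ∈ Icc (-R) R)
    {j k n : ℕ} (hj : j ≤ n) (hk : k ≤ n) : |j * t ^ k| ≤ n * R ^ n := by
  rw [abs_mul, Nat.abs_cast]
  exact mul_le_mul (by exact_mod_cast hj) (abs_pow_le_of_mem_Icc hR ht hk) (abs_nonneg _)
    (Nat.cast_nonneg n)

theorem hasC11Bounds_pow {a n : ℕ} (ha : a ≤ n) {R : ℝ} (hR : 1 ≤ R) :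
    HasC11Bounds (fun t => t ^ a) (fun t => a * t ^ (a - 1)) (Icc (-R) R)
      (R ^ n) (n * R ^ n) (n ^ 2 * R ^ n) := by
  refine ⟨fun t => hasDerivAt_pow a t, fun t ht => abs_pow_le_of_mem_Icc hR ht ha,
    fun t ht => abs_natCast_mul_pow_le_of_mem_Icc hR ht ha (by omega), fun s hs t ht => ?_⟩
  refine (convex_Icc (-R) R).norm_image_sub_le_of_norm_hasDerivWithin_le
    (fun x _ => ((hasDerivAt_pow (a - 1) x).const_mul (a : ℝ)).hasDerivWithinAt)
    (fun x hx => ?_) ht hs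
  rw [Real.norm_eq_abs, abs_mul, Nat.abs_cast, sq, mul_assoc]
  exact mul_le_mul (by exact_mod_cast ha)
    (abs_natCast_mul_pow_le_of_mem_Icc hR hx (by omega) (by omega)) (abs_nonneg _)
    (Nat.cast_nonneg n)

theorem hasDerivAt_max_zero_sq (x : ℝ) :
    HasDerivAt (fun y => max y 0 ^ 2) (2 * max x 0) x := by
  refine hasDerivAt_of_hasDerivAt_of_ne' (f := fun y => max y 0 ^ 2) (g := fun y => 2 * max y 0)
    (x := 0) (fun y hy => ?_) (by fun_prop) (by fun_prop) x
  rcases hy.lt_or_gt with hy | hy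
  · have h : (fun y : ℝ => max y 0 ^ 2) =ᶠ[𝓝 y] fun _ => 0 := by
      filter_upwards [Iio_mem_nhds hy] with z hz
      rw [max_eq_right (le_of_lt hz), sq, mul_zero]
    rw [max_eq_right hy.le, mul_zero]
    exact (hasDerivAt_const y 0).congr_of_eventuallyEq h
  · have h : (fun y : ℝ => max y 0 ^ 2) =ᶠ[𝓝 y] fun z => z ^ 2 := by
      filter_upwards [Ioi_mem_nhds hy] with z hz
      rw [max_eq_left hz.le]
    rw [max_eq_left hy.le]
    simpa using (hasDerivAt_pow 2 y).congr_of_eventuallyEq h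

theorem sFun_eq (x : ℝ) :
    sFun x = 2 * max x 0 ^ 2 - 4 * max (x - 1 / 2) 0 ^ 2 + 2 * max (x - 1) 0 ^ 2
      - 2 * max (x - 5) 0 ^ 2 + 4 * max (x - 11 / 2) 0 ^ 2 - 2 * max (x - 6) 0 ^ 2 := by
  unfold sFun
  split_ifs <;> simp (disch := grind) only [max_eq_left, max_eq_right] <;> ring

def sFunDeriv (x : ℝ) : ℝ :=
  4 * max x 0 - 8 * max (x - 1 / 2) 0 + 4 * max (x - 1) 0
    - 4 * max (x - 5) 0 + 8 * max (x - 11 / 2) 0 - 4 * max (x - 6) 0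

theorem hasDerivAt_sFun (x : ℝ) : HasDerivAt sFun (sFunDeriv x) x := by
  have h (c : ℝ) := (hasDerivAt_max_zero_sq (x - c)).comp_sub_const x c
  have H := ((((((h 0).const_mul 2).sub ((h (1 / 2)).const_mul 4)).add ((h 1).const_mul 2)).sub
    ((h 5).const_mul 2)).add ((h (11 / 2)).const_mul 4)).sub ((h 6).const_mul 2)
  refine (H.congr_deriv ?_).congr_of_eventuallyEq (Eventually.of_forall fun y => ?_)
  · simp only [sFunDeriv, sub_zero]; ring
  · simp only [Pi.add_apply, Pi.sub_apply, sub_zero, sFun_eq]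

theorem abs_sFun_le_one (x : ℝ) : |sFun x| ≤ 1 := by
  unfold sFun
  split_ifs <;> rw [abs_le] <;> constructor <;> nlinarith

theorem abs_sFunDeriv_le_two (x : ℝ) : |sFunDeriv x| ≤ 2 := by
  unfold sFunDeriv
  simp only [max_def]
  split_ifs <;> rw [abs_le] <;> constructor <;> linarith

theorem abs_sFunDeriv_sub_le (x y : ℝ) : |sFunDeriv x - sFunDeriv y| ≤ 32 * |x - y| := by
  have h (c : ℝ) := abs_le.mp <| abs_max_sub_max_le_abs (x - c) (y - c) 0
  simp only [sub_sub_sub_cancel_right] at h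
  have h0 := abs_le.mp <| abs_max_sub_max_le_abs x y 0
  unfold sFunDeriv
  rw [abs_le]
  constructor <;> linarith [h0.1, h0.2, (h (1 / 2)).1, (h (1 / 2)).2, (h 1).1, (h 1).2,
    (h 5).1, (h 5).2, (h (11 / 2)).1, (h (11 / 2)).2, (h 6).1, (h 6).2]

theorem support_sFun_subset : support sFun ⊆ Icc 0 6 := by
  intro x hx
  by_contra h
  rw [mem_Icc, not_and_or, not_le, not_le] at h
  apply hx
  unfold sFun
  split_ifs <;> grind

theorem hasC11Bounds_sFun : HasC11Bounds sFun sFunDeriv univ 1 2 32 :=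
  ⟨hasDerivAt_sFun, fun t _ => abs_sFun_le_one t, fun t _ => abs_sFunDeriv_le_two t,
    fun s _ t _ => abs_sFunDeriv_sub_le s t⟩

theorem hasC11Bounds_smOne (K m : ℕ) :
    HasC11Bounds (smOne K m) (fun t => 4 * K * sFunDeriv (4 * K * t + (5 - 4 * m))) univ
      1 (4 * K * 2) ((4 * K) ^ 2 * 32) := by
  have h := hasC11Bounds_sFun.comp_affine (c := 4 * K) (by positivity) (5 - 4 * m)
  rw [preimage_univ] at h
  convert h using 1
  funext t
  rw [smOne, add_sub_assoc]

/-- Dominates the constants `2ⁿ`, `2ⁿ (n + 8K) / K` and `2ⁿ (n² + 16nK + 512K²) / K²` that the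
product rule gives for `t ^ a * s_m(t)` on `[-2, 2]` when `a ≤ n` and `1 ≤ K`. -/
def trunkConst (n : ℕ) : ℝ := 2 ^ n * (n ^ 2 + 16 * n + 512)

theorem one_le_trunkConst (n : ℕ) : 1 ≤ trunkConst n :=
  one_le_mul_of_one_le_of_one_le (one_le_pow₀ one_le_two) (by nlinarith [n.cast_nonneg (α := ℝ)])

theorem exists_hasC11Bounds_pow_mul_smOne {a n K : ℕ} (ha : a ≤ n) (hK : 1 ≤ K) (m : ℕ) :
    ∃ g', HasC11Bounds (fun t => t ^ a * smOne K m t) g' (Icc (-2) 2)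
      (trunkConst n) (trunkConst n * K) (trunkConst n * K ^ 2) := by
  have hK' : (1 : ℝ) ≤ K := by exact_mod_cast hK
  have hn : (0 : ℝ) ≤ n := n.cast_nonneg
  have h2n : (0 : ℝ) < 2 ^ n := by positivity
  refine ⟨_, ((hasC11Bounds_pow ha one_le_two).mul ((hasC11Bounds_smOne K m).mono
    (subset_univ _)) (convex_Icc _ _)).mono_bounds ?_ ?_ ?_⟩ <;> unfold trunkConst
  · nlinarith
  · have h : (n : ℝ) + 8 * K ≤ (n ^ 2 + 16 * n + 512) * K := by nlinarith
    linarith [mul_le_mul_of_nonneg_left h h2n.le]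
  · have h : (n : ℝ) ^ 2 + 16 * n * K + 512 * K ^ 2 ≤ (n ^ 2 + 16 * n + 512) * K ^ 2 := by
      nlinarith [mul_le_mul_of_nonneg_left hK' (mul_nonneg hn (by positivity : (0:ℝ) ≤ K))]
    linarith [mul_le_mul_of_nonneg_left h h2n.le]

theorem support_smOne_subset {K : ℕ} (hK : 0 < K) (m : ℕ) :
    support (smOne K m) ⊆ Icc ((4 * m - 5) / (4 * K)) ((4 * m + 1) / (4 * K)) := by
  intro t ht
  obtain ⟨h₀, h₆⟩ := support_sFun_subset ht
  have hK' : (0 : ℝ) < 4 * K := by positivity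
  constructor
  · rw [div_le_iff₀ hK']; linarith
  · rw [le_div_iff₀ hK']; linarith

section ProdApply

open Finset

variable {ι : Type*} [Fintype ι] [DecidableEq ι] {g g' : ι → ℝ → ℝ} {S : Set ℝ}
  {A₀ A₁ A₂ : ℝ}

theorem hasFDerivAt_prod_apply (hg : ∀ j t, HasDerivAt (g j) (g' j t) t) (x : ι → ℝ) :
    HasFDerivAt (fun y => ∏ j, g j (y j)) (∑ i, ((∏ j ∈ univ.erase i, g j (x j)) * g' i (x i)) •
      (ContinuousLinearMap.proj i : (ι → ℝ) →L[ℝ] ℝ)) x := by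
  have h : HasFDerivAt (fun y => ∏ j, g j (y j)) (∑ i, (∏ j ∈ univ.erase i, g j (x j)) •
      g' i (x i) • (ContinuousLinearMap.proj i : (ι → ℝ) →L[ℝ] ℝ)) x :=
    .finsetProd fun i _ => (hg i (x i)).comp_hasFDerivAt x (hasFDerivAt_apply i x)
  simpa only [smul_smul] using h

theorem abs_prod_apply_sub_prod_apply_le (hg : ∀ j, HasC11Bounds (g j) (g' j) S A₀ A₁ A₂)
    (hS : Convex ℝ S) (s : Finset ι) {x y : ι → ℝ} (hx : ∀ j, x j ∈ S) (hy : ∀ j, y j ∈ S) :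
    |∏ j ∈ s, g j (x j) - ∏ j ∈ s, g j (y j)| ≤ A₀ ^ (#s - 1) * (#s * (A₁ * ‖x - y‖)) := by
  refine (abs_prod_sub_prod_le s (fun j _ => (hg j).abs_le _ (hx j))
    fun j _ => (hg j).abs_le _ (hy j)).trans ?_
  rcases s.eq_empty_or_nonempty with rfl | ⟨j₀, -⟩
  · simp
  have hA₀ : 0 ≤ A₀ := (abs_nonneg _).trans ((hg j₀).abs_le _ (hx j₀))
  have hA₁ : 0 ≤ A₁ := (abs_nonneg _).trans ((hg j₀).abs_deriv_le _ (hx j₀))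
  refine mul_le_mul_of_nonneg_left ?_ (pow_nonneg hA₀ _)
  rw [← nsmul_eq_mul]
  refine sum_le_card_nsmul _ _ _ fun j _ => ((hg j).abs_sub_le hS (hx j) (hy j)).trans ?_
  exact mul_le_mul_of_nonneg_left (norm_le_pi_norm (x - y) j) hA₁

theorem abs_prod_erase_apply_le (hg : ∀ j, HasC11Bounds (g j) (g' j) S A₀ A₁ A₂) {x : ι → ℝ}
    (hx : ∀ j, x j ∈ S) (i : ι) :
    |∏ j ∈ univ.erase i, g j (x j)| ≤ A₀ ^ (Fintype.card ι - 1) := by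
  simpa [card_erase_of_mem] using
    abs_prod_le_pow_card (univ.erase i) fun j _ => (hg j).abs_le _ (hx j)

theorem norm_fderiv_prod_apply_le (hg : ∀ j, HasC11Bounds (g j) (g' j) S A₀ A₁ A₂) {x : ι → ℝ}
    (hx : ∀ j, x j ∈ S) :
    ‖fderiv ℝ (fun y => ∏ j, g j (y j)) x‖ ≤
      Fintype.card ι * (A₀ ^ (Fintype.card ι - 1) * A₁) := by
  rw [(hasFDerivAt_prod_apply (fun j => (hg j).hasDerivAt) x).fderiv]
  refine (norm_sum_smul_proj_le _).trans ?_
  calc _ ≤ ∑ _i : ι, A₀ ^ (Fintype.card ι - 1) * A₁ := sum_le_sum fun i _ => by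
        have hP := abs_prod_erase_apply_le hg hx i
        rw [abs_mul]
        exact mul_le_mul hP ((hg i).abs_deriv_le _ (hx i)) (abs_nonneg _)
          ((abs_nonneg _).trans hP)
    _ = _ := by simp

theorem norm_fderiv_prod_apply_sub_le (hg : ∀ j, HasC11Bounds (g j) (g' j) S A₀ A₁ A₂)
    (hS : Convex ℝ S) (hA₂ : 0 ≤ A₂) {x y : ι → ℝ} (hx : ∀ j, x j ∈ S) (hy : ∀ j, y j ∈ S) :
    ‖fderiv ℝ (fun y => ∏ j, g j (y j)) x - fderiv ℝ (fun y => ∏ j, g j (y j)) y‖ ≤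
      Fintype.card ι * (A₀ ^ (Fintype.card ι - 1) * A₂ +
        A₁ * (A₀ ^ (Fintype.card ι - 2) * ((Fintype.card ι - 1 : ℕ) * A₁))) * ‖x - y‖ := by
  have hD := fun z => (hasFDerivAt_prod_apply (fun j => (hg j).hasDerivAt) z).fderiv
  have hsub : fderiv ℝ (fun y => ∏ j, g j (y j)) x - fderiv ℝ (fun y => ∏ j, g j (y j)) y =
      ∑ i, ((∏ j ∈ univ.erase i, g j (x j)) * g' i (x i) -
        (∏ j ∈ univ.erase i, g j (y j)) * g' i (y i)) • ContinuousLinearMap.proj i := by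
    rw [hD, hD, ← sum_sub_distrib]
    exact sum_congr rfl fun i _ => (sub_smul _ _ _).symm
  rw [hsub]
  refine (norm_sum_smul_proj_le _).trans ?_
  calc _ ≤ ∑ _i : ι, (A₀ ^ (Fintype.card ι - 1) * (A₂ * ‖x - y‖) + A₁ *
        (A₀ ^ (Fintype.card ι - 2) * ((Fintype.card ι - 1 : ℕ) * (A₁ * ‖x - y‖)))) :=
        sum_le_sum fun i _ => ?_
    _ = _ := by simp; ring
  have hP := abs_prod_erase_apply_le hg hx i
  have hPsub := abs_prod_apply_sub_prod_apply_le hg hS (univ.erase i) hx hy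
  rw [card_erase_of_mem (mem_univ i), card_univ, Nat.sub_sub] at hPsub
  refine (abs_mul_sub_mul_le _ _ _ _).trans ?_
  gcongr
  · exact (abs_nonneg _).trans hP
  · exact (hg i).abs_deriv_sub_le _ (hx i) _ (hy i) |>.trans
      (mul_le_mul_of_nonneg_left (norm_le_pi_norm (x - y) i) hA₂)
  · exact (abs_nonneg _).trans ((hg i).abs_deriv_le _ (hy i))
  · exact (hg i).abs_deriv_le _ (hy i)

theorem norm_fderiv_fderiv_prod_apply_le (hg : ∀ j, HasC11Bounds (g j) (g' j) S A₀ A₁ A₂)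
    (hS : Convex ℝ S) (hA₀ : 0 ≤ A₀) (hA₁ : 0 ≤ A₁) (hA₂ : 0 ≤ A₂) {x : ι → ℝ}
    (hx : ∀ j, x j ∈ interior S) :
    ‖fderiv ℝ (fderiv ℝ (fun y => ∏ j, g j (y j))) x‖ ≤
      Fintype.card ι * (A₀ ^ (Fintype.card ι - 1) * A₂ +
        A₁ * (A₀ ^ (Fintype.card ι - 2) * ((Fintype.card ι - 1 : ℕ) * A₁))) := by
  have hU : Set.univ.pi (fun _ => S) ∈ 𝓝 x :=
    set_pi_mem_nhds Set.finite_univ fun j _ => mem_interior_iff_mem_nhds.mp (hx j)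
  refine norm_fderiv_le_of_lip' ℝ (by positivity) ?_
  filter_upwards [hU] with y hy
  exact norm_fderiv_prod_apply_sub_le hg hS hA₂ (fun j => hy j (Set.mem_univ j))
    fun j => interior_subset (hx j)

theorem norm_iteratedFDeriv_prod_apply_le {B K : ℝ} (hB : 1 ≤ B) (hK : 1 ≤ K)
    (hg : ∀ j, HasC11Bounds (g j) (g' j) S B (B * K) (B * K ^ 2)) (hS : Convex ℝ S)
    {x : ι → ℝ} (hx : ∀ j, x j ∈ interior S) {k : ℕ} (hk : k ≤ 2) :
    ‖iteratedFDeriv ℝ k (fun y => ∏ j, g j (y j)) x‖ ≤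
      (Fintype.card ι + 1) ^ 2 * B ^ (Fintype.card ι + 2) * K ^ 2 := by
  set d := Fintype.card ι
  have hxS : ∀ j, x j ∈ S := fun j => interior_subset (hx j)
  have hBB : B ≤ B ^ 2 := by nlinarith
  have hKK : K ≤ K ^ 2 := by nlinarith
  set Q := B ^ d * (B ^ 2 * K ^ 2) with hQ
  have hQ₀ : 0 ≤ Q := by positivity
  have hdQ : d * Q ≤ (d + 1) ^ 2 * Q := by gcongr; nlinarith
  rw [show (d + 1) ^ 2 * B ^ (d + 2) * K ^ 2 = (d + 1) ^ 2 * Q by ring]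
  interval_cases k
  · rw [norm_iteratedFDeriv_zero, Real.norm_eq_abs]
    have h1 : 1 ≤ B ^ 2 * K ^ 2 :=
      one_le_mul_of_one_le_of_one_le (one_le_pow₀ hB) (one_le_pow₀ hK)
    calc _ ≤ B ^ d := (abs_prod_le_pow_card _ fun j _ => (hg j).abs_le _ (hxS j)).trans_eq
          (by rw [card_univ])
      _ ≤ Q := le_mul_of_one_le_right (by positivity) h1
      _ ≤ (d + 1) ^ 2 * Q := le_mul_of_one_le_left hQ₀ (by nlinarith)
  · rw [norm_iteratedFDeriv_one]
    refine (norm_fderiv_prod_apply_le hg hxS).trans (le_trans ?_ hdQ)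
    rw [hQ]
    gcongr
    exact Nat.sub_le d 1
  · rw [← norm_iteratedFDeriv_fderiv, norm_iteratedFDeriv_one]
    refine (norm_fderiv_fderiv_prod_apply_le hg hS (by positivity) (by positivity)
      (by positivity) hx).trans ?_
    have h1 : B ^ (d - 1) * (B * K ^ 2) ≤ Q := by
      rw [hQ]
      gcongr
      exact Nat.sub_le d 1
    have h2 : B * K * (B ^ (d - 2) * ((d - 1 : ℕ) * (B * K))) ≤ d * Q := by
      calc _ = (d - 1 : ℕ) * (B ^ (d - 2) * (B ^ 2 * K ^ 2)) := by ring
        _ ≤ d * Q := by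
          rw [hQ]
          gcongr
          exacts [Nat.sub_le d 1, Nat.sub_le d 2]
    calc _ ≤ d * (Q + d * Q) := by gcongr
      _ ≤ (d + 1) ^ 2 * Q := by nlinarith

end ProdApply

theorem support_prod_apply_subset {ι : Type*} [Fintype ι] {g : ι → ℝ → ℝ} {s : ι → Set ℝ}
    (h : ∀ j, support (g j) ⊆ s j) : support (fun x => ∏ j, g j (x j)) ⊆ Set.univ.pi s :=
  fun _ hx j _ => h j fun hj => hx (Finset.prod_eq_zero (Finset.mem_univ j) hj)

theorem setIntegral_le_mul_measureReal_of_support_subset {α : Type*} [MeasurableSpace α]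
    {μ : Measure α} {s t : Set α} {F : α → ℝ} {C : ℝ} (hs : MeasurableSet s) (ht : μ t ≠ ⊤)
    (hF : support F ⊆ t) (hC : 0 ≤ C) (hb : ∀ x ∈ s, |F x| ≤ C) :
    ∫ x in s, F x ∂μ ≤ C * μ.real t := by
  rw [setIntegral_eq_of_subset_of_forall_sdiff_eq_zero hs inter_subset_left
    fun x hx => notMem_support.mp fun h => hx.2 ⟨hx.1, hF h⟩]
  calc ∫ x in s ∩ t, F x ∂μ ≤ C * μ.real (s ∩ t) :=
        (Real.le_norm_self _).trans <| norm_setIntegral_le_of_norm_le_const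
          ((measure_mono inter_subset_right).trans_lt ht.lt_top) fun x hx => hb x hx.1
    _ ≤ C * μ.real t := mul_le_mul_of_nonneg_left (measureReal_mono inter_subset_right ht) hC

theorem hNorm_le_of_norm_iteratedFDeriv_le {d n : ℕ} {f : (Fin d → ℝ) → ℝ}
    {t : Set (Fin d → ℝ)} {M : ℝ} (ht : IsCompact t) (hf : support f ⊆ t) (hM : 0 ≤ M)
    (hb : ∀ k ≤ n, ∀ x ∈ unitCube d, ‖iteratedFDeriv ℝ k f x‖ ≤ M) :
    hNorm d n f ≤ M * √((n + 1) * volume.real t) := by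
  have hk : ∀ k ∈ Finset.range (n + 1),
      ∫ x in unitCube d, ‖iteratedFDeriv ℝ k f x‖ ^ 2 ≤ M ^ 2 * volume.real t := by
    intro k hk
    have hsupp : support (iteratedFDeriv ℝ k f) ⊆ t :=
      (support_iteratedFDeriv_subset k).trans (closure_minimal hf ht.isClosed)
    refine setIntegral_le_mul_measureReal_of_support_subset measurableSet_Icc
      ht.measure_lt_top.ne (fun x hx => hsupp fun h => hx (by simp [h])) (sq_nonneg M)
      fun x hx => ?_
    rw [abs_of_nonneg (sq_nonneg _)]
    exact pow_le_pow_left₀ (norm_nonneg _)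
      (hb k (Nat.lt_succ_iff.mp (Finset.mem_range.mp hk)) x hx) 2
  calc hNorm d n f ≤ √(∑ _k ∈ Finset.range (n + 1), M ^ 2 * volume.real t) :=
        Real.sqrt_le_sqrt (Finset.sum_le_sum hk)
    _ = M * √((n + 1) * volume.real t) := by
      conv_rhs => rw [← Real.sqrt_sq hM, ← Real.sqrt_mul (sq_nonneg M)]
      rw [Finset.sum_const, Finset.card_range, nsmul_eq_mul]
      push_cast
      ring_nf

theorem sq_mul_sqrt_mul_div_pow {K : ℝ} (hK : 0 < K) (c a : ℝ) (d : ℕ) :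
    K ^ 2 * √(c * (a / K) ^ d) = √(c * a ^ d) * K ^ ((2 : ℝ) - d / 2) := by
  rw [div_pow, mul_div_assoc', Real.sqrt_div' _ (by positivity), Real.rpow_sub hK,
    Real.sqrt_eq_rpow (K ^ d), ← Real.rpow_natCast K d, ← Real.rpow_mul hK.le]
  rw [Real.rpow_two, show (d : ℝ) * (1 / 2) = d / 2 by ring]
  ring

def trunkBox (d K : ℕ) (mv : Fin d → ℕ) : Set (Fin d → ℝ) :=
  Set.univ.pi fun j => Icc ((4 * mv j - 5 : ℝ) / (4 * K)) ((4 * mv j + 1) / (4 * K))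

theorem measureReal_trunkBox {d K : ℕ} (hK : 0 < K) (mv : Fin d → ℕ) :
    volume.real (trunkBox d K mv) = (3 / (2 * K)) ^ d := by
  have hK' : (0 : ℝ) < K := by exact_mod_cast hK
  have hw (j : Fin d) :
      (4 * mv j + 1 : ℝ) / (4 * K) - (4 * mv j - 5) / (4 * K) = 3 / (2 * K) := by
    field_simp; ring
  simp only [trunkBox, measureReal_def, volume_pi_pi, Real.volume_Icc, ENNReal.toReal_prod, hw]
  rw [ENNReal.toReal_ofReal (by positivity), Finset.prod_const, Finset.card_univ,
    Fintype.card_fin]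

theorem support_trunk_subset {d K : ℕ} (hK : 0 < K) (mv α : Fin d → ℕ) :
    support (fun x => ∏ j, x j ^ α j * smOne K (mv j) (x j)) ⊆ trunkBox d K mv :=
  support_prod_apply_subset fun j =>
    (support_mul_subset_right _ _).trans (support_smOne_subset hK (mv j))

theorem norm_iteratedFDeriv_trunk_le {d n K : ℕ} (hK : 0 < K) (mv : Fin d → ℕ)
    {α : Fin d → ℕ} (hα : ∀ i, α i ≤ n) {k : ℕ} (hk : k ≤ 2) {x : Fin d → ℝ}
    (hx : x ∈ unitCube d) :
    ‖iteratedFDeriv ℝ k (fun x => ∏ j, x j ^ α j * smOne K (mv j) (x j)) x‖ ≤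
      (d + 1) ^ 2 * trunkConst n ^ (d + 2) * K ^ 2 := by
  choose g' hg using fun j => exists_hasC11Bounds_pow_mul_smOne (hα j) hK (mv j)
  have hx' (j : Fin d) : x j ∈ interior (Icc (-2) 2) := by
    have h₀ : 0 ≤ x j := hx.1 j
    have h₁ : x j ≤ 1 := hx.2 j
    rw [interior_Icc]
    constructor <;> linarith
  simpa using norm_iteratedFDeriv_prod_apply_le (one_le_trunkConst n) (by exact_mod_cast hK) hg
    (convex_Icc _ _) hx' hk

theorem trunk_basis_h2_bound_general
    (d n : ℕ) :
    ∃ C : ℝ, 0 < C ∧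
      ∀ (K : ℕ), 0 < K → ∀ mv : Fin d → ℕ, (∀ j, 1 ≤ mv j ∧ mv j ≤ K) →
      ∀ α : Fin d → ℕ, ∑ i, α i ≤ n - 1 →
        hNorm d 2 (fun x => (∏ i, x i ^ α i) * smProd d K mv x) ≤
          C * (K : ℝ) ^ ((2 : ℝ) - (d : ℝ) / 2) := by
  have hB := one_le_trunkConst n
  refine ⟨(d + 1) ^ 2 * trunkConst n ^ (d + 2) * √(3 * (3 / 2) ^ d), by positivity,
    fun K hK mv _ α hα => ?_⟩
  have hαn (i : Fin d) : α i ≤ n :=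
    (Finset.single_le_sum (fun j _ => (α j).zero_le) (Finset.mem_univ i)).trans
      (hα.trans (n.sub_le 1))
  calc hNorm d 2 (fun x => (∏ i, x i ^ α i) * smProd d K mv x)
      = hNorm d 2 (fun x => ∏ j, x j ^ α j * smOne K (mv j) (x j)) := by
        simp only [smProd, ← Finset.prod_mul_distrib]
    _ ≤ (d + 1) ^ 2 * trunkConst n ^ (d + 2) * K ^ 2 * √((2 + 1) * volume.real (trunkBox d K mv)) :=
        hNorm_le_of_norm_iteratedFDeriv_le (isCompact_univ_pi fun _ => isCompact_Icc)
          (support_trunk_subset hK mv α) (by positivity)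
          fun k hk x hx => norm_iteratedFDeriv_trunk_le hK mv hαn hk hx
    _ = (d + 1) ^ 2 * trunkConst n ^ (d + 2) * √(3 * (3 / 2) ^ d) * K ^ ((2 : ℝ) - d / 2) := by
      rw [measureReal_trunkBox hK, mul_assoc, div_mul_eq_div_div,
        sq_mul_sqrt_mul_div_pow (by positivity)]
      norm_num
      ring

/-- there is `C = C(n,d)` such that for every `K`, every `𝐦 ∈ {1,…,K}^d`
and every multi-index `α` with `|α| ≤ n-1`, the trunk basis function `x^α s_𝐦(x)` satisfies
`‖x^α s_𝐦‖_{H²([0,1]^d)} ≤ C K^{2 - d/2}`. -/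
theorem trunk_basis_h2_bound
    (d n : ℕ) (hd : 0 < d) (hn : 0 < n) :
    ∃ C : ℝ, 0 < C ∧
      ∀ (K : ℕ), 0 < K → ∀ mv : Fin d → ℕ, (∀ j, 1 ≤ mv j ∧ mv j ≤ K) →
      ∀ α : Fin d → ℕ, ∑ i, α i ≤ n - 1 →
        hNorm d 2 (fun x => (∏ i, x i ^ α i) * smProd d K mv x) ≤
          C * (K : ℝ) ^ ((2 : ℝ) - (d : ℝ) / 2) :=
  trunk_basis_h2_bound_general d n
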